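/- Let d be a positive integer, ν̃ > 0 and D ≥ 0 real numbers, set ν = ν̃ d, w = (ν̃ + 1)/(ν̃ + D), and w_ν̃ = w − log w. Let ψ(x) denote the derivative at x of y ↦ log Γ(y). Then d · [ (1/2) ψ((ν + d)/2) − (1/2) ψ(ν/2) − d/(2ν) − (1/2) log(1 + dD/ν) − ((ν + d)/2)( 1/(ν + dD) − 1/ν ) ] ≤ (d/2) ( −w_ν̃ + 1 + ((ν̃ + 2)/(ν̃ + 1)) · (1/ν̃) ), and the right-hand side equals w_ν̃ · (d/2) · ( −1 + ( (ν̃ + 2)/(ν̃ + 1) + ν̃ ) / (ν̃ w_ν̃) ). -/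

import Mathlib

/-!
Both digamma values are squeezed by the elementary bounds
`log x - 1/x ≤ ψ x ≤ log x - 1/(2x)` for `x > 0`. The lower bound and the cruder `ψ x ≤ log x`
are slopes of the convex function `log Γ` on `[x, x + 1]`, where `log Γ` increases by `log x`.
For the sharp upper bound, `g t = log t - 1/(2t) - ψ t` satisfies `g (t + 1) ≤ g t` by the
trapezoid bound on `log (t + 1) - log t`, while `g t ≥ -1/(2t) → 0`, so `g ≥ 0`.
Inserting the bounds, the logarithms combine into `log w`, and what remains of the gradient bound
is the slack `(d - 1)(ν̃ + 2) / (2 ν̃ (ν̃ + 1)) ≥ 0`.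
-/

open Real Filter Topology

local notation "ψ" => deriv fun y : ℝ => Real.log (Real.Gamma y)

theorem differentiableAt_log_Gamma {x : ℝ} (hx : 0 < x) :
    DifferentiableAt ℝ (fun y => log (Gamma y)) x :=
  (differentiableAt_Gamma fun m => ((neg_nonpos.mpr m.cast_nonneg).trans_lt hx).ne').log
    (Gamma_pos_of_pos hx).ne'

theorem log_Gamma_add_one {x : ℝ} (hx : 0 < x) :
    log (Gamma (x + 1)) = log (Gamma x) + log x := by
  rw [Gamma_add_one hx.ne', log_mul hx.ne' (Gamma_pos_of_pos hx).ne', add_comm]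

theorem deriv_log_Gamma_add_one {x : ℝ} (hx : 0 < x) : ψ (x + 1) = ψ x + x⁻¹ := by
  rw [← deriv_comp_add_const, ← deriv_log,
    ← deriv_add (differentiableAt_log_Gamma hx) (differentiableAt_log hx.ne')]
  refine EventuallyEq.deriv_eq ?_
  filter_upwards [eventually_gt_nhds hx] with t ht
  exact log_Gamma_add_one ht

theorem slope_log_Gamma_add_one {x : ℝ} (hx : 0 < x) :
    slope (fun y => log (Gamma y)) x (x + 1) = log x := by
  rw [slope_def_field, log_Gamma_add_one hx]
  ring

theorem deriv_log_Gamma_le_log {x : ℝ} (hx : 0 < x) : ψ x ≤ log x := by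
  have h := convexOn_log_Gamma.deriv_le_slope (Set.mem_Ioi.mpr hx)
    (Set.mem_Ioi.mpr (by linarith : 0 < x + 1)) (by linarith) (differentiableAt_log_Gamma hx)
  rwa [← slope_log_Gamma_add_one hx]

theorem log_sub_inv_le_deriv_log_Gamma {x : ℝ} (hx : 0 < x) : log x - x⁻¹ ≤ ψ x := by
  have h := convexOn_log_Gamma.slope_le_deriv (Set.mem_Ioi.mpr hx)
    (Set.mem_Ioi.mpr (by linarith : 0 < x + 1)) (by linarith)
    (differentiableAt_log_Gamma (by linarith : 0 < x + 1))
  have hrec := deriv_log_Gamma_add_one hx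
  change slope (fun y => log (Gamma y)) x (x + 1) ≤ ψ (x + 1) at h
  rw [slope_log_Gamma_add_one hx] at h
  linarith

theorem log_lt_sub_inv_div_two {y : ℝ} (hy : 1 < y) : log y < (y - y⁻¹) / 2 := by
  rw [← sinh_log (by linarith)]
  exact self_lt_sinh_iff.mpr (log_pos hy)

theorem log_add_one_sub_log_le {x : ℝ} (hx : 0 < x) :
    log (x + 1) - log x ≤ (x⁻¹ + (x + 1)⁻¹) / 2 := by
  have h := log_lt_sub_inv_div_two (one_lt_div hx |>.mpr (lt_add_one x))
  rw [log_div (by linarith) hx.ne', inv_div] at h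
  have hsum : (x + 1) / x - x / (x + 1) = x⁻¹ + (x + 1)⁻¹ := by
    field_simp
    ring
  exact hsum ▸ h.le

theorem deriv_log_Gamma_le_log_sub_inv_div_two {x : ℝ} (hx : 0 < x) :
    ψ x ≤ log x - x⁻¹ / 2 := by
  set g : ℝ → ℝ := fun t => log t - t⁻¹ / 2 - ψ t with hg
  have hanti : Antitone fun n : ℕ => g (x + n) := antitone_nat_of_succ_le fun n => by
    have ht : 0 < x + n := by positivity
    have htrap := log_add_one_sub_log_le ht
    have hrec := deriv_log_Gamma_add_one ht
    simp only [hg, Nat.cast_add_one, ← add_assoc]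
    linarith
  have hlower (n : ℕ) : -(x + n)⁻¹ / 2 ≤ g x := by
    have hψ := deriv_log_Gamma_le_log (by positivity : 0 < x + n)
    have hn := hanti (Nat.zero_le n)
    simp only [hg, Nat.cast_zero, add_zero] at hn ⊢
    linarith
  have hlim : Tendsto (fun n : ℕ => -(x + n)⁻¹ / 2) atTop (𝓝 0) := by
    simpa using ((tendsto_inv_atTop_zero.comp
      (tendsto_atTop_add_const_left atTop x tendsto_natCast_atTop_atTop)).neg).div_const 2
  have hg0 : 0 ≤ g x := le_of_tendsto' hlim hlower
  simp only [hg] at hg0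
  linarith

theorem deriv_log_Gamma_sub_le {a b : ℝ} (ha : 0 < a) (hb : 0 < b) :
    ψ b - ψ a ≤ log (b / a) + a⁻¹ - b⁻¹ / 2 := by
  have := deriv_log_Gamma_le_log_sub_inv_div_two hb
  have := log_sub_inv_le_deriv_log_Gamma ha
  rw [log_div hb.ne' ha.ne']
  linarith

theorem dof_gradient_rational_terms_le {x d D : ℝ} (hx : 0 < x) (hd : 1 ≤ d) (hD : 0 ≤ D) :
    (1 / 2) * ((x * d / 2)⁻¹ - ((x * d + d) / 2)⁻¹ / 2) - d / (2 * (x * d))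
        - ((x * d + d) / 2) * (1 / (x * d + d * D) - 1 / (x * d))
      ≤ (1 / 2) * (-((x + 1) / (x + D)) + 1 + (x + 2) / (x + 1) * (1 / x)) := by
  have hslack : 0 ≤ (d - 1) * (x + 2) / (2 * d * (x * (x + 1))) := by
    have : 0 ≤ d - 1 := by linarith
    positivity
  have hgap : (1 / 2) * (-((x + 1) / (x + D)) + 1 + (x + 2) / (x + 1) * (1 / x))
      - ((1 / 2) * ((x * d / 2)⁻¹ - ((x * d + d) / 2)⁻¹ / 2) - d / (2 * (x * d))
        - ((x * d + d) / 2) * (1 / (x * d + d * D) - 1 / (x * d)))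
      = (d - 1) * (x + 2) / (2 * d * (x * (x + 1))) := by
    have : 0 < d := by linarith
    field_simp
    ring
  linarith

/-- Surrogate gradient bound (eq. (15) of the AdaTerm paper) for the update of the
proportionality coefficient `ν̃ = ν/d` of the degrees of freedom, with `ν = ν̃·d`,
robustness weight `w = (ν̃+1)/(ν̃+D)`, `w_ν̃ = w - log w`, and digamma `ψ = (log Γ)'`. -/
theorem studentT_dof_coeff_gradient_upper_bound
    (d : ℕ) (hd : 1 ≤ d) (νt D : ℝ) (hνt : 0 < νt) (hD : 0 ≤ D)
    (ν w wν : ℝ) (hν : ν = νt * d) (hw : w = (νt + 1) / (νt + D)) (hwν : wν = w - Real.log w) :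
    (d : ℝ) * ((1 / 2) * deriv (fun y : ℝ => Real.log (Real.Gamma y)) ((ν + d) / 2)
          - (1 / 2) * deriv (fun y : ℝ => Real.log (Real.Gamma y)) (ν / 2)
          - d / (2 * ν) - (1 / 2) * Real.log (1 + d * D / ν)
          - ((ν + d) / 2) * (1 / (ν + d * D) - 1 / ν))
        ≤ (d / 2) * (-wν + 1 + ((νt + 2) / (νt + 1)) * (1 / νt))
      ∧ (d / 2) * (-wν + 1 + ((νt + 2) / (νt + 1)) * (1 / νt))
        = wν * (d / 2) * (-1 + (((νt + 2) / (νt + 1)) + νt) / (νt * wν)) := by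
  have hd1 : (1 : ℝ) ≤ d := by exact_mod_cast hd
  have hwpos : 0 < w := hw ▸ by positivity
  have hwνpos : 0 < wν := hwν ▸ by linarith [log_le_sub_one_of_pos hwpos]
  refine ⟨?_, by field_simp; ring⟩
  subst hν hw hwν
  have hψ := deriv_log_Gamma_sub_le (by positivity : 0 < νt * d / 2)
    (by positivity : 0 < (νt * d + d) / 2)
  have hlog : log ((νt * d + d) / 2 / (νt * d / 2)) - log (1 + d * D / (νt * d))
      = log ((νt + 1) / (νt + D)) := by
    rw [← log_div (by positivity) (by positivity)]
    congr 1
    field_simp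
  have hrat := dof_gradient_rational_terms_le hνt hd1 hD
  calc _ ≤ (d : ℝ) * ((1 / 2) * (-((νt + 1) / (νt + D) - log ((νt + 1) / (νt + D))) + 1
        + (νt + 2) / (νt + 1) * (1 / νt))) :=
        mul_le_mul_of_nonneg_left (by linarith) (by positivity)
    _ = _ := by ring
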